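/- arXiv:1407.7800 — 4 statements merged into one kernel-verified Lean document; each statement's English description precedes it below -/
import Mathlib

section
/- For every integer n ≥ 1 and every symmetric polynomial G ∈ ℂ[x_1,…,x_n] (i.e., G invariant under every permutation of its n variables), the element G(J_1,…,J_n) obtained by substituting the Jucys–Murphy elements for the indeterminates lies in the center Z(ℂ[S_n]) of the group algebra, i.e., it commutes with every element of ℂ[S_n]. -/
/-- The Jucys–Murphy element `J_b = ∑_{a < b} (a b)` in the complex group algebra of `S_n`. -/
noncomputable def JM (n : ℕ) (b : Fin n) : MonoidAlgebra ℂ (Equiv.Perm (Fin n)) :=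
  ∑ a ∈ Finset.Iio b, MonoidAlgebra.single (Equiv.swap a b) 1

/-- Substitution of the (pairwise commuting) Jucys–Murphy elements `J_1, …, J_n` for the
indeterminates of a multivariate polynomial `G ∈ ℂ[x_1, …, x_n]`: each monomial
`c · x_1^{m_1} ⋯ x_n^{m_n}` is sent to `c • J_1^{m_1} ⋯ J_n^{m_n}`. -/
noncomputable def evalJM (n : ℕ) (G : MvPolynomial (Fin n) ℂ) :
    MonoidAlgebra ℂ (Equiv.Perm (Fin n)) :=
  ∑ m ∈ G.support, G.coeff m • ((List.finRange n).map fun i => JM n i ^ m i).prod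

/-! The adjacent transpositions `s = (i i+1)` generate `S_n`, so it suffices that `G(J)` commutes
with each of them. With the Jucys–Murphy elements they satisfy the degenerate affine Hecke
relations `s J_k = J_k s` for `k ≠ i, i+1`, `s J_{i+1} = J_i s + 1` and `s J_i = J_{i+1} s - 1`.
By induction on `f` these give `s f(J) = (s f)(J) s - (∂ f)(J)`, where `∂ f` is the divided
difference `(f - s f) / (x_i - x_{i+1})`; for symmetric `f` both `s f = f` and `∂ f = 0`. -/

open scoped IsMulCommutative
open MonoidAlgebra MvPolynomial Equiv Finset

namespace MvPolynomial

variable {σ R A : Type*}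

section Evaluation

variable [CommSemiring R] [Semiring A] [Algebra R A]

noncomputable def aevalOfCommute (x : σ → A) (hx : ∀ i j, Commute (x i) (x j)) :
    MvPolynomial σ R →ₐ[R] A :=
  haveI := Algebra.isMulCommutative_adjoin R (s := Set.range x) (by
    rintro _ ⟨i, rfl⟩ _ ⟨j, rfl⟩
    exact hx i j)
  (Algebra.adjoin R (Set.range x)).val.comp
    (aeval fun i => ⟨x i, Algebra.subset_adjoin ⟨i, rfl⟩⟩)

@[simp]
theorem aevalOfCommute_X (x : σ → A) (hx : ∀ i j, Commute (x i) (x j)) (i : σ) :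
    aevalOfCommute x hx (X i : MvPolynomial σ R) = x i := by
  simp [aevalOfCommute]

theorem aevalOfCommute_eq_sum {n : ℕ} (x : Fin n → A) (hx : ∀ i j, Commute (x i) (x j))
    (f : MvPolynomial (Fin n) R) :
    aevalOfCommute x hx f
      = ∑ m ∈ f.support, f.coeff m • ((List.finRange n).map fun i => x i ^ m i).prod := by
  simp [aevalOfCommute, aeval_def, eval₂_eq', Algebra.smul_def, Fin.prod_univ_def,
    SubmonoidClass.coe_list_prod, Function.comp_def]

end Evaluation

section DividedDifference

variable [DecidableEq σ] [CommRing R] [Ring A] [Algebra R A]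
  (φ : MvPolynomial σ R →ₐ[R] A) {t : A} {i j : σ}

theorem exists_mul_eq_rename_swap_mul_sub
    (hk : ∀ k, k ≠ i → k ≠ j → Commute t (φ (X k)))
    (hi : t * φ (X i) = φ (X j) * t - 1) (hj : t * φ (X j) = φ (X i) * t + 1)
    (f : MvPolynomial σ R) :
    ∃ g, f - rename (swap i j) f = (X i - X j) * g ∧
      t * φ f = φ (rename (swap i j) f) * t - φ g := by
  induction f using MvPolynomial.induction_on with
  | C c => exact ⟨0, by simp, by simp [Algebra.commutes]⟩
  | add p q hp hq =>
    obtain ⟨g, hpg, htp⟩ := hp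
    obtain ⟨h, hqh, htq⟩ := hq
    refine ⟨g + h, by rw [map_add]; linear_combination hpg + hqh, ?_⟩
    simp only [map_add, mul_add, add_mul, htp, htq]
    abel
  | mul_X p k hp =>
    obtain ⟨g, hpg, htp⟩ := hp
    by_cases hki : k = i
    · subst hki
      refine ⟨g * X k + rename (swap k j) p, ?_, ?_⟩
      · rw [map_mul, rename_X, swap_apply_left]
        linear_combination (X k : MvPolynomial σ R) * hpg
      · simp only [map_mul, map_add, rename_X, swap_apply_left]
        rw [← mul_assoc, htp, sub_mul, mul_assoc, hi]
        noncomm_ring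
    by_cases hkj : k = j
    · subst hkj
      refine ⟨g * X k - rename (swap i k) p, ?_, ?_⟩
      · rw [map_mul, rename_X, swap_apply_right]
        linear_combination (X k : MvPolynomial σ R) * hpg
      · simp only [map_mul, map_sub, rename_X, swap_apply_right]
        rw [← mul_assoc, htp, sub_mul, mul_assoc, hj]
        noncomm_ring
    · refine ⟨g * X k, ?_, ?_⟩
      · rw [map_mul, rename_X, swap_apply_of_ne_of_ne hki hkj]
        linear_combination (X k : MvPolynomial σ R) * hpg
      · simp only [map_mul, rename_X, swap_apply_of_ne_of_ne hki hkj]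
        rw [← mul_assoc, htp, sub_mul, mul_assoc, (hk k hki hkj).eq]
        noncomm_ring

theorem commute_of_rename_swap_eq [IsDomain R] (hij : i ≠ j)
    (hk : ∀ k, k ≠ i → k ≠ j → Commute t (φ (X k)))
    (hi : t * φ (X i) = φ (X j) * t - 1) (hj : t * φ (X j) = φ (X i) * t + 1)
    {f : MvPolynomial σ R} (hf : rename (swap i j) f = f) : Commute t (φ f) := by
  obtain ⟨g, hfg, htf⟩ := exists_mul_eq_rename_swap_mul_sub φ hk hi hj f
  have hX : (X i - X j : MvPolynomial σ R) ≠ 0 := sub_ne_zero.2 (X_injective.ne hij)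
  have hg : g = 0 := by
    rw [hf, sub_self, eq_comm] at hfg
    exact (mul_eq_zero.1 hfg).resolve_left hX
  rw [hf, hg, map_zero, sub_zero] at htf
  exact htf

end DividedDifference

end MvPolynomial

theorem MonoidAlgebra.commute_of_closure_eq_top {k G : Type*} [CommSemiring k] [Monoid G]
    {S : Set G} (hS : Submonoid.closure S = ⊤) {z : MonoidAlgebra k G}
    (hz : ∀ g ∈ S, Commute z (of k G g)) (x : MonoidAlgebra k G) : Commute z x := by
  have hG : Submonoid.closure S ≤ (Submonoid.centralizer {z}).comap (of k G) :=
    Submonoid.closure_le.2 fun g hg => Submonoid.mem_centralizer_iff.2 fun _ h => h ▸ hz g hg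
  induction x using MonoidAlgebra.induction_on with
  | of g => exact Submonoid.mem_centralizer_iff.1 (hG (hS ▸ Submonoid.mem_top g)) z rfl
  | add x y hx hy => exact hx.add_right hy
  | smul r x hx => exact hx.smul_right r

theorem MonoidAlgebra.single_mul_single_swap {k α : Type*} [Semiring k] [DecidableEq α]
    (π : Perm α) (a b : α) :
    single π (1 : k) * single (swap a b) 1 = single (swap (π a) (π b)) 1 * single π 1 := by
  simp only [single_mul_single, mul_one, mul_swap_eq_swap_mul]

section JucysMurphy

variable {n : ℕ}

theorem single_mul_JM (π : Perm (Fin n)) (b : Fin n) :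
    single π 1 * JM n b = (∑ a ∈ Iio b, single (swap (π a) (π b)) 1) * single π 1 := by
  simp only [JM, mul_sum, sum_mul, single_mul_single_swap]

theorem commute_single_JM {π : Perm (Fin n)} {b : Fin n} (hb : π b = b)
    (hπ : ∀ a < b, π a < b) : Commute (single π 1) (JM n b) := by
  have himage : (Iio b).image π = Iio b :=
    eq_of_subset_of_card_le (fun _ ha => by
      obtain ⟨y, hy, rfl⟩ := mem_image.1 ha
      exact mem_Iio.2 (hπ y (mem_Iio.1 hy)))
      (card_image_of_injective _ π.injective).ge
  rw [Commute, SemiconjBy, single_mul_JM, hb, JM]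
  conv_rhs => rw [← himage, sum_image fun _ _ _ _ h => π.injective h]

theorem JM_commute (a b : Fin n) : Commute (JM n a) (JM n b) := by
  wlog hab : a < b generalizing a b
  · rcases (not_lt.1 hab).eq_or_lt with rfl | hba
    · rfl
    · exact (this b a hba).symm
  refine Commute.sum_left _ _ _ fun x hx => commute_single_JM ?_ fun y hy => ?_
  · exact swap_apply_of_ne_of_ne (mem_Iio.1 hx |>.trans hab).ne' hab.ne'
  · have hxa := mem_Iio.1 hx
    rcases eq_or_ne y x with rfl | hyx
    · rwa [swap_apply_left]
    rcases eq_or_ne y a with rfl | hya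
    · rw [swap_apply_right]; exact hxa.trans hab
    · rwa [swap_apply_of_ne_of_ne hyx hya]

section Adjacent

variable (i : Fin n)

theorem Fin.Iio_succ_eq_insert_Iio_castSucc :
    Iio i.succ = insert i.castSucc (Iio i.castSucc) := by
  ext y
  simp only [mem_Iio, mem_insert, Fin.lt_def, Fin.ext_iff, Fin.val_succ, Fin.val_castSucc]
  omega

theorem swap_castSucc_succ_apply_of_lt {a : Fin (n + 1)} (ha : a < i.castSucc) :
    swap i.castSucc i.succ a = a :=
  swap_apply_of_ne_of_ne ha.ne (ha.trans Fin.castSucc_lt_succ).ne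

theorem commute_single_swap_JM {k : Fin (n + 1)} (hkc : k ≠ i.castSucc) (hks : k ≠ i.succ) :
    Commute (single (swap i.castSucc i.succ) 1) (JM (n + 1) k) := by
  refine commute_single_JM (swap_apply_of_ne_of_ne hkc hks) fun y hy => ?_
  rcases eq_or_ne y i.castSucc with rfl | hyc
  · rw [swap_apply_left]
    exact (Fin.castSucc_lt_iff_succ_le.1 hy).lt_of_ne hks.symm
  rcases eq_or_ne y i.succ with rfl | hys
  · rw [swap_apply_right]; exact Fin.castSucc_lt_succ.trans hy
  · rwa [swap_apply_of_ne_of_ne hyc hys]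

theorem single_swap_mul_JM_succ :
    single (swap i.castSucc i.succ) 1 * JM (n + 1) i.succ
      = JM (n + 1) i.castSucc * single (swap i.castSucc i.succ) 1 + 1 := by
  rw [single_mul_JM, Fin.Iio_succ_eq_insert_Iio_castSucc, sum_insert notMem_Iio_self, add_mul,
    swap_apply_left, swap_apply_right, swap_comm, single_mul_single, mul_one, swap_mul_self,
    ← MonoidAlgebra.one_def, add_comm (1 : MonoidAlgebra ℂ _), JM]
  congr 2
  exact sum_congr rfl fun a ha => by rw [swap_castSucc_succ_apply_of_lt i (mem_Iio.1 ha)]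

theorem single_swap_mul_JM_castSucc :
    single (swap i.castSucc i.succ) 1 * JM (n + 1) i.castSucc
      = JM (n + 1) i.succ * single (swap i.castSucc i.succ) 1 - 1 := by
  rw [single_mul_JM, JM, Fin.Iio_succ_eq_insert_Iio_castSucc, sum_insert notMem_Iio_self, add_mul,
    single_mul_single, mul_one, swap_mul_self, ← MonoidAlgebra.one_def, add_sub_cancel_left,
    swap_apply_left]
  congr 1
  exact sum_congr rfl fun a ha => by rw [swap_castSucc_succ_apply_of_lt i (mem_Iio.1 ha)]

end Adjacent

theorem evalJM_eq_aevalOfCommute (G : MvPolynomial (Fin n) ℂ) :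
    evalJM n G = aevalOfCommute (JM n) JM_commute G :=
  (aevalOfCommute_eq_sum _ _ G).symm

theorem commute_single_swap_evalJM (i : Fin n) {G : MvPolynomial (Fin (n + 1)) ℂ}
    (hG : rename (swap i.castSucc i.succ) G = G) :
    Commute (single (swap i.castSucc i.succ) 1) (evalJM (n + 1) G) := by
  rw [evalJM_eq_aevalOfCommute]
  refine commute_of_rename_swap_eq _ Fin.castSucc_lt_succ.ne (fun k hkc hks => ?_) ?_ ?_ hG
  · simpa using commute_single_swap_JM i hkc hks
  · simpa using single_swap_mul_JM_castSucc i
  · simpa using single_swap_mul_JM_succ i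

end JucysMurphy

/-- A symmetric polynomial evaluated at the Jucys–Murphy elements lies in the center of the
group algebra `ℂ[S_n]`, i.e. it commutes with every element of `ℂ[S_n]`. -/
theorem symmetric_evalJM_central (n : ℕ) (hn : 1 ≤ n) (G : MvPolynomial (Fin n) ℂ)
    (hG : G.IsSymmetric) :
    ∀ x : MonoidAlgebra ℂ (Equiv.Perm (Fin n)), evalJM n G * x = x * evalJM n G := by
  obtain ⟨m, rfl⟩ : ∃ m, n = m + 1 := ⟨n - 1, by omega⟩
  intro x
  refine (commute_of_closure_eq_top (Perm.mclosure_swap_castSucc_succ m) ?_ x).eq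
  rintro _ ⟨i, rfl⟩
  exact (commute_single_swap_evalJM i (hG _)).symm
end

section
/- For every integer n ≥ 1 and every k ≥ 0, the complete homogeneous symmetric polynomial evaluated at the Jucys–Murphy elements satisfies h_k(J_1,…,J_n) = Σ (a_1 b_1)(a_2 b_2)⋯(a_k b_k), where the sum in ℂ[S_n] runs over all sequences of transpositions ((a_1 b_1),…,(a_k b_k)) with 1 ≤ a_i < b_i ≤ n for each i and b_1 ≤ b_2 ≤ ⋯ ≤ b_k (i.e., over all weakly monotonically increasing sequences of k transpositions). -/
/-!
Evaluated as `J_1^{m_1} ⋯ J_n^{m_n}`, with the factors in increasing order, the monomial `x^m`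
becomes `J_{b_1} ⋯ J_{b_k}` for the unique weakly increasing `b` with multiplicities `m`; so
`h_k(J_1, …, J_n)` is the sum of these products over all weakly increasing `b`, and no
commutation of the Jucys–Murphy elements is needed. Expanding each product with
`J_b = ∑_{a < b} (a b)` gives exactly the transposition sequences with right ends `b_1 ≤ ⋯ ≤ b_k`.
-/

open scoped Classical

theorem Fintype.piFinset_fin_succ {α : Type*} {k : ℕ} (S : Fin (k + 1) → Finset α) :
    Fintype.piFinset S =
      (S 0 ×ˢ Fintype.piFinset fun i => S i.succ).map (Fin.consEquiv fun _ => α).toEmbedding := by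
  have h := Finset.filter_piFinset_eq_map_consEquiv S fun _ => True
  rw [Finset.filter_true, Finset.filter_true] at h
  exact h

theorem List.prod_ofFn_sum {R α : Type*} [Semiring R] {k : ℕ} (S : Fin k → Finset α)
    (f : Fin k → α → R) :
    (List.ofFn fun i => ∑ a ∈ S i, f i a).prod
      = ∑ g ∈ Fintype.piFinset S, (List.ofFn fun i => f i (g i)).prod := by
  induction k with
  | zero => simp
  | succ k ih =>
    rw [List.ofFn_succ, List.prod_cons, ih, Finset.sum_mul_sum, Fintype.piFinset_fin_succ,
      Finset.sum_map, Finset.sum_product]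
    simp [List.ofFn_succ]

theorem MonoidAlgebra.list_prod_ofFn_single {R G : Type*} [Semiring R] [Monoid G] {k : ℕ}
    (g : Fin k → G) :
    (List.ofFn fun i => single (g i) (1 : R)).prod = single (List.ofFn g).prod 1 := by
  simpa [List.map_ofFn, Function.comp_def] using (map_list_prod (of R G) (List.ofFn g)).symm

theorem MvPolynomial.prod_map_X_eq_monomial {σ R : Type*} [CommSemiring R] [DecidableEq σ]
    (s : Multiset σ) :
    (s.map X).prod = monomial (Multiset.toFinsupp s) (1 : R) := by
  rw [← prod_X_pow_eq_monomial, Multiset.toFinsupp_support, Finset.prod_multiset_map_count]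
  simp [Multiset.toFinsupp_apply]

theorem List.exists_ofFn_eq {α : Type*} {k : ℕ} (l : List α) (hl : l.length = k) :
    ∃ b : Fin k → α, List.ofFn b = l := by
  subst hl
  exact ⟨_, List.ofFn_getElem⟩

theorem Finset.sum_sym_eq_sum_monotone {α M : Type*} [LinearOrder α] [Fintype α]
    [AddCommMonoid M] (k : ℕ) (f : Multiset α → M) :
    ∑ s : Sym α k, f s.1 = ∑ b : Fin k → α with Monotone b, f (List.ofFn b) := by
  symm
  refine Finset.sum_nbij (fun b => ⟨List.ofFn b, by simp⟩) (fun _ _ => Finset.mem_univ _) ?_ ?_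
    fun _ _ => rfl
  · intro b₁ hb₁ b₂ hb₂ h
    simp only [Finset.coe_filter, Finset.mem_univ, true_and, Set.mem_ofPred_eq] at hb₁ hb₂
    refine List.ofFn_injective (List.Perm.eq_of_sortedLE hb₁.sortedLE_ofFn hb₂.sortedLE_ofFn ?_)
    exact Multiset.coe_eq_coe.1 (congrArg Subtype.val h)
  · intro s _
    obtain ⟨b, hb⟩ := List.exists_ofFn_eq (s.1.sort (· ≤ ·)) (by rw [Multiset.length_sort, s.2])
    refine ⟨b, ?_, Sym.coe_injective ?_⟩
    · simpa [← List.sortedLE_ofFn_iff, hb] using (Multiset.pairwise_sort s.1 (· ≤ ·)).sortedLE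
    · simp [hb, Multiset.sort_eq]

theorem Fin.flatMap_replicate_count {n : ℕ} {l : List (Fin n)} (hl : l.SortedLE) :
    (List.finRange n).flatMap (fun i => List.replicate (l.count i) i) = l := by
  refine List.Perm.eq_of_sortedLE ?_ hl (List.perm_iff_count.2 fun a => ?_)
  · rw [List.sortedLE_iff_pairwise, List.pairwise_flatMap]
    refine ⟨fun i _ => List.pairwise_replicate.2 (Or.inr le_rfl), ?_⟩
    refine (List.sortedLT_finRange n).pairwise.imp fun hij x hx y hy => ?_
    rw [List.eq_of_mem_replicate hx, List.eq_of_mem_replicate hy]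
    exact hij.le
  · simp [List.count_flatMap, List.count_replicate, ← Fin.sum_univ_def]

theorem Fin.list_prod_map_pow_count {M : Type*} [Monoid M] {n : ℕ} (F : Fin n → M)
    {l : List (Fin n)} (hl : l.SortedLE) :
    ((List.finRange n).map fun i => F i ^ l.count i).prod = (l.map F).prod := by
  conv_rhs => rw [← Fin.flatMap_replicate_count hl]
  simp [List.flatMap_def, List.prod_flatten, Function.comp_def, List.prod_replicate]

noncomputable def monomialJM (n : ℕ) (m : Fin n →₀ ℕ) : MonoidAlgebra ℂ (Equiv.Perm (Fin n)) :=
  ((List.finRange n).map fun i => JM n i ^ m i).prod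

theorem evalJM_eq_linearCombination (n : ℕ) (G : MvPolynomial (Fin n) ℂ) :
    evalJM n G =
      Finsupp.linearCombination ℂ (monomialJM n) (AddMonoidAlgebra.coeffLinearEquiv ℂ G) :=
  rfl

theorem evalJM_sum {ι : Type*} (n : ℕ) (s : Finset ι) (G : ι → MvPolynomial (Fin n) ℂ) :
    evalJM n (∑ i ∈ s, G i) = ∑ i ∈ s, evalJM n (G i) := by
  simp only [evalJM_eq_linearCombination, map_sum]

theorem evalJM_monomial_one (n : ℕ) (m : Fin n →₀ ℕ) :
    evalJM n (MvPolynomial.monomial m 1) = monomialJM n m := by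
  have : AddMonoidAlgebra.coeff (MvPolynomial.monomial m (1 : ℂ)) = Finsupp.single m 1 := rfl
  simp [evalJM_eq_linearCombination, this]

theorem monomialJM_toFinsupp_ofFn {n k : ℕ} {b : Fin k → Fin n} (hb : Monotone b) :
    monomialJM n (Multiset.toFinsupp (List.ofFn b)) = (List.ofFn fun i => JM n (b i)).prod := by
  simp only [monomialJM, Multiset.toFinsupp_apply, Multiset.coe_count]
  rw [Fin.list_prod_map_pow_count _ hb.sortedLE_ofFn, List.map_ofFn]
  rfl

theorem list_prod_ofFn_JM {n k : ℕ} (b : Fin k → Fin n) :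
    (List.ofFn fun i => JM n (b i)).prod =
      ∑ a ∈ Fintype.piFinset fun i => Finset.Iio (b i),
        MonoidAlgebra.single (List.ofFn fun i => Equiv.swap (a i) (b i)).prod 1 := by
  simp only [JM, List.prod_ofFn_sum, MonoidAlgebra.list_prod_ofFn_single]

theorem hsymm_JM_eq_sum_weakly_monotone_general (n : ℕ) (k : ℕ) :
    evalJM n (MvPolynomial.hsymm (Fin n) ℂ k) =
      ∑ p ∈ Finset.univ.filter
          (fun p : (Fin k → Fin n) × (Fin k → Fin n) =>
            (∀ i, p.1 i < p.2 i) ∧ Monotone p.2),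
        MonoidAlgebra.single ((List.ofFn fun i => Equiv.swap (p.1 i) (p.2 i)).prod) 1 := by
  rw [Finset.sum_finset_product_right _ {b | Monotone b}
      (fun b => Fintype.piFinset fun i => Finset.Iio (b i))
      (fun p => by simp [Fintype.mem_piFinset, and_comm])]
  simp only [← list_prod_ofFn_JM]
  rw [MvPolynomial.hsymm, evalJM_sum,
    Finset.sum_sym_eq_sum_monotone k fun s => evalJM n (s.map MvPolynomial.X).prod]
  refine Finset.sum_congr rfl fun b hb => ?_
  rw [MvPolynomial.prod_map_X_eq_monomial, evalJM_monomial_one,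
    monomialJM_toFinsupp_ofFn (Finset.mem_filter.1 hb).2]

/-- The complete homogeneous symmetric polynomial `h_k` evaluated at the Jucys–Murphy elements
equals the sum, in `ℂ[S_n]`, of the products `(a_1 b_1) ⋯ (a_k b_k)` over all weakly
monotonically increasing sequences of `k` transpositions, i.e. sequences with `a_i < b_i`
for each `i` and `b_1 ≤ b_2 ≤ ⋯ ≤ b_k`. -/
theorem hsymm_JM_eq_sum_weakly_monotone (n : ℕ) (hn : 1 ≤ n) (k : ℕ) :
    evalJM n (MvPolynomial.hsymm (Fin n) ℂ k) =
      ∑ p ∈ Finset.univ.filter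
          (fun p : (Fin k → Fin n) × (Fin k → Fin n) =>
            (∀ i, p.1 i < p.2 i) ∧ Monotone p.2),
        MonoidAlgebra.single ((List.ofFn fun i => Equiv.swap (p.1 i) (p.2 i)).prod) 1 :=
  hsymm_JM_eq_sum_weakly_monotone_general n k
end

section
/- Let n ≥ 1, let c_1,…,c_l and d_1,…,d_m be nonnegative integers with k := Σ_{a=1}^l c_a + Σ_{b=1}^m d_b, and let K be a conjugacy class of S_n. If g and g' are conjugate elements of S_n, then the number of multimonotonic sequences of transpositions ((a_1 b_1),…,(a_k b_k)) of type ((c_1,…,c_l),(d_1,…,d_m)) such that (a_1 b_1)(a_2 b_2)⋯(a_k b_k)·g ∈ K is equal to the number of such sequences with (a_1 b_1)(a_2 b_2)⋯(a_k b_k)·g' ∈ K. In other words, the multimonotonic path count from the conjugacy class of g to K is well-defined, depending only on the conjugacy class (cycle type) of g. -/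
/-- A list `L` of pairs `(a_i, b_i)`, encoding the sequence of transpositions
`((a_1 b_1), …, (a_k b_k))`, is *multimonotonic of type `(cs, ds)`* if `a_i < b_i` for each
`i` and `L` splits into consecutive blocks of lengths `cs` followed by blocks of lengths
`ds`, where within each of the first blocks the second entries are strictly increasing and
within each of the last blocks they are weakly increasing. -/
def IsMultimonotonic (n : ℕ) (cs ds : List ℕ) (L : List (Fin n × Fin n)) : Prop :=
  (∀ p ∈ L, p.1 < p.2) ∧
  ∃ B C : List (List (Fin n × Fin n)),
    L = (B ++ C).flatten ∧
    B.map List.length = cs ∧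
    C.map List.length = ds ∧
    (∀ β ∈ B, (β.map Prod.snd).Chain' (· < ·)) ∧
    (∀ β ∈ C, (β.map Prod.snd).Chain' (· ≤ ·))

/-- The product, in `S_n`, of the sequence of transpositions encoded by a list of pairs. -/
def prodT (n : ℕ) (L : List (Fin n × Fin n)) : Equiv.Perm (Fin n) :=
  (L.map fun p => Equiv.swap p.1 p.2).prod

/-!
In the group ring `ℤ[S_n]`, the sum of the products of all words `(a₁ b₁) ⋯ (a_c b_c)` with
`aᵢ < bᵢ` and strictly (weakly) increasing `bᵢ` is the elementary (complete homogeneous)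
symmetric function of degree `c` in the Jucys–Murphy elements `X_j = ∑_{i<j} (i j)`, so the sum
`Z` of all multimonotonic words of a given type is a product of such symmetric functions. These
are central: the adjacent transposition `s = (u u+1)` commutes with `X_j` for `j ≠ u, u+1`, and
`s X_{u+1} = X_u s + 1` makes it commute with `X_u + X_{u+1}` and `X_u X_{u+1}`, through which
alone `X_u, X_{u+1}` enter. Hence the coefficient of `π` in `Z`, the number of multimonotonic
words with product `π`, is a class function, and summing it over the `π` with `π g ∈ K` gives a
count that is unchanged when `g` is replaced by a conjugate.
-/

open Equiv MonoidAlgebra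

section OrderedSymm

variable {A : Type*}

/-- Noncommutative elementary and complete homogeneous symmetric polynomials of a list
`[x₁, …, xₘ]`: the sums of the products `x_{i₁} ⋯ x_{i_c}` over `i₁ < ⋯ < i_c`, respectively
`i₁ ≤ ⋯ ≤ i_c`. -/
def orderedEsymm [Semiring A] : List A → ℕ → A
  | _, 0 => 1
  | [], _ + 1 => 0
  | x :: l, c + 1 => orderedEsymm l (c + 1) + x * orderedEsymm l c

def orderedHsymm [Semiring A] : List A → ℕ → A
  | _, 0 => 1
  | [], _ + 1 => 0
  | x :: l, c + 1 => orderedHsymm l (c + 1) + x * orderedHsymm (x :: l) c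
  termination_by l c => (l.length, c)

variable [Ring A] {S : Subring A} {x y : A} {p r : List A}

@[simp] lemma orderedEsymm_zero (l : List A) : orderedEsymm l 0 = 1 := by cases l <;> rfl

@[simp] lemma orderedEsymm_nil_succ (c : ℕ) : orderedEsymm ([] : List A) (c + 1) = 0 := rfl

lemma orderedEsymm_cons_succ (x : A) (l : List A) (c : ℕ) :
    orderedEsymm (x :: l) (c + 1) = orderedEsymm l (c + 1) + x * orderedEsymm l c := rfl

@[simp] lemma orderedHsymm_zero (l : List A) : orderedHsymm l 0 = 1 := by
  cases l <;> rw [orderedHsymm]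

@[simp] lemma orderedHsymm_nil_succ (c : ℕ) : orderedHsymm ([] : List A) (c + 1) = 0 := by
  rw [orderedHsymm]

lemma orderedHsymm_cons_succ (x : A) (l : List A) (c : ℕ) :
    orderedHsymm (x :: l) (c + 1) = orderedHsymm l (c + 1) + x * orderedHsymm (x :: l) c := by
  rw [orderedHsymm]

lemma orderedEsymm_mem (hl : ∀ z ∈ p, z ∈ S) (c : ℕ) : orderedEsymm p c ∈ S := by
  induction p generalizing c with
  | nil => cases c <;> simp
  | cons z p ih =>
    rw [List.forall_mem_cons] at hl
    cases c with
    | zero => simp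
    | succ c =>
      exact add_mem (ih hl.2 _) (mul_mem hl.1 (ih hl.2 _))

lemma orderedHsymm_mem (hl : ∀ z ∈ p, z ∈ S) (c : ℕ) : orderedHsymm p c ∈ S := by
  induction p generalizing c with
  | nil => cases c <;> simp
  | cons z p ih =>
    rw [List.forall_mem_cons] at hl
    induction c with
    | zero => simp
    | succ c ihc => rw [orderedHsymm_cons_succ]; exact add_mem (ih hl.2 _) (mul_mem hl.1 ihc)

/-- `x` and `y` enter only through `(1 + x t)(1 + y t) = 1 + (x + y) t + x y t²`. -/
lemma orderedEsymm_append_pair_mem (hsum : x + y ∈ S) (hprod : x * y ∈ S)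
    (hp : ∀ z ∈ p, z ∈ S) (hr : ∀ z ∈ r, z ∈ S) (c : ℕ) :
    orderedEsymm (p ++ x :: y :: r) c ∈ S := by
  induction p generalizing c with
  | nil =>
    match c with
    | 0 => simp
    | 1 =>
      have : orderedEsymm (x :: y :: r) 1 = orderedEsymm r 1 + (x + y) := by
        simp only [orderedEsymm_cons_succ, orderedEsymm_zero]; noncomm_ring
      rw [List.nil_append, this]
      exact add_mem (orderedEsymm_mem hr 1) hsum
    | c + 2 =>
      have : orderedEsymm (x :: y :: r) (c + 2) = orderedEsymm r (c + 2)
          + (x + y) * orderedEsymm r (c + 1) + x * y * orderedEsymm r c := by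
        simp only [orderedEsymm_cons_succ]; noncomm_ring
      rw [List.nil_append, this]
      exact add_mem (add_mem (orderedEsymm_mem hr _) (mul_mem hsum (orderedEsymm_mem hr _)))
        (mul_mem hprod (orderedEsymm_mem hr _))
  | cons z p ih =>
    rw [List.forall_mem_cons] at hp
    cases c with
    | zero => simp
    | succ c =>
      rw [List.cons_append, orderedEsymm_cons_succ]
      exact add_mem (ih hp.2 _) (mul_mem hp.1 (ih hp.2 _))

/-- For commuting `x, y`, the series `∑ h_c(x, y) t^c = ((1 - x t)(1 - y t))⁻¹` gives
`h_{c+2} = (x + y) h_{c+1} - x y h_c`. -/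
lemma orderedHsymm_append_pair_mem (hxy : Commute x y) (hsum : x + y ∈ S) (hprod : x * y ∈ S)
    (hp : ∀ z ∈ p, z ∈ S) (hr : ∀ z ∈ r, z ∈ S) (c : ℕ) :
    orderedHsymm (p ++ x :: y :: r) c ∈ S := by
  induction p generalizing c with
  | nil =>
    rw [List.nil_append]
    induction c using Nat.twoStepInduction with
    | zero => simp
    | one =>
      have : orderedHsymm (x :: y :: r) 1 = orderedHsymm r 1 + (x + y) := by
        simp only [orderedHsymm_cons_succ, orderedHsymm_zero]; noncomm_ring
      rw [this]
      exact add_mem (orderedHsymm_mem hr 1) hsum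
    | more c ih₀ ih₁ =>
      have : orderedHsymm (x :: y :: r) (c + 2) = orderedHsymm r (c + 2)
          + (x + y) * orderedHsymm (x :: y :: r) (c + 1)
          - x * y * orderedHsymm (x :: y :: r) c := by
        rw [orderedHsymm_cons_succ x, orderedHsymm_cons_succ y, orderedHsymm_cons_succ x (y :: r),
          hxy.eq]
        noncomm_ring
      rw [this]
      exact sub_mem (add_mem (orderedHsymm_mem hr _) (mul_mem hsum ih₁)) (mul_mem hprod ih₀)
  | cons z p ih =>
    rw [List.forall_mem_cons] at hp
    induction c with
    | zero => simp
    | succ c ihc =>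
      rw [List.cons_append, orderedHsymm_cons_succ]
      exact add_mem (ih hp.2 _) (mul_mem hp.1 ihc)

lemma mem_centralizer_singleton_iff_commute {s z : A} :
    z ∈ Subring.centralizer {s} ↔ Commute s z := by
  simp [Subring.mem_centralizer_iff, Commute, SemiconjBy]

end OrderedSymm

section JucysMurphy

variable {k : Type*} [Ring k] {n : ℕ}

noncomputable def jucysMurphy (j : Fin n) : k[Perm (Fin n)] :=
  ∑ i ∈ Finset.Iio j, of k _ (swap i j)

lemma commute_of_jucysMurphy_of_apply_eq {σ : Perm (Fin n)} {j : Fin n} (hj : σ j = j)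
    (hσ : ∀ i, σ i < j ↔ i < j) : Commute (of k _ σ) (jucysMurphy j) := by
  simp only [Commute, SemiconjBy, jucysMurphy, Finset.mul_sum, Finset.sum_mul, ← map_mul]
  refine Finset.sum_equiv σ (fun i => by simp [hσ]) fun i _ => ?_
  rw [← hj, swap_apply_apply, hj]
  group

lemma jucysMurphy_commute (i j : Fin n) :
    Commute (jucysMurphy (k := k) i) (jucysMurphy j) := by
  wlog hij : i < j generalizing i j
  · rcases (not_lt.1 hij).eq_or_lt with rfl | hji
    · exact Commute.refl _
    · exact (this j i hji).symm
  refine Commute.sum_left _ _ _ fun a ha => commute_of_jucysMurphy_of_apply_eq ?_ fun b => ?_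
  · have := Finset.mem_Iio.1 ha
    exact swap_apply_of_ne_of_ne (by omega) (by omega)
  · have := Finset.mem_Iio.1 ha
    rw [swap_apply_def]
    split_ifs <;> omega

section Adjacent

variable {u v : Fin n} (huv : (u : ℕ) + 1 = v)
include huv

lemma of_swap_mul_jucysMurphy_succ :
    of k _ (swap u v) * jucysMurphy v = jucysMurphy u * of k _ (swap u v) + 1 := by
  have hIio : Finset.Iio v = insert u (Finset.Iio u) := by
    ext i; simp only [Finset.mem_Iio, Finset.mem_insert, Fin.lt_def, Fin.ext_iff]; omega
  rw [jucysMurphy, hIio, Finset.sum_insert (by simp), mul_add, ← map_mul, swap_mul_self,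
    map_one, add_comm, jucysMurphy, Finset.mul_sum, Finset.sum_mul]
  congr 1
  refine Finset.sum_congr rfl fun i hi => ?_
  have := Finset.mem_Iio.1 hi
  have hconj := swap_apply_apply (swap u v) i v
  rw [swap_apply_of_ne_of_ne (by omega) (by omega), swap_apply_right] at hconj
  rw [← map_mul, ← map_mul, hconj, swap_inv, mul_assoc _ (swap u v), swap_mul_self, mul_one]

lemma jucysMurphy_succ_mul_of_swap :
    jucysMurphy v * of k _ (swap u v) = of k _ (swap u v) * jucysMurphy u + 1 := by
  have hs : of k _ (swap u v) * of k _ (swap u v) = 1 := by rw [← map_mul, swap_mul_self, map_one]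
  calc jucysMurphy v * of k _ (swap u v)
      = of k _ (swap u v) * (of k _ (swap u v) * jucysMurphy v) * of k _ (swap u v) := by
        rw [← mul_assoc, hs, one_mul]
    _ = _ := by
        rw [of_swap_mul_jucysMurphy_succ huv]
        simp only [mul_add, add_mul, mul_assoc, hs, mul_one]

lemma commute_of_swap_jucysMurphy_add :
    Commute (of k _ (swap u v)) (jucysMurphy u + jucysMurphy v) := by
  rw [Commute, SemiconjBy, mul_add, add_mul, of_swap_mul_jucysMurphy_succ huv,
    jucysMurphy_succ_mul_of_swap huv]
  abel

lemma commute_of_swap_jucysMurphy_mul :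
    Commute (of k _ (swap u v)) (jucysMurphy u * jucysMurphy v) := by
  have hu : of k _ (swap u v) * jucysMurphy u = jucysMurphy v * of k _ (swap u v) - 1 :=
    eq_sub_of_add_eq (jucysMurphy_succ_mul_of_swap huv).symm
  calc of k _ (swap u v) * (jucysMurphy u * jucysMurphy v)
      = (jucysMurphy v * of k _ (swap u v) - 1) * jucysMurphy v := by rw [← hu, mul_assoc]
    _ = jucysMurphy v * (jucysMurphy u * of k _ (swap u v)) := by
        rw [sub_mul, one_mul, mul_assoc, of_swap_mul_jucysMurphy_succ huv, mul_add, mul_one,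
          add_sub_cancel_right]
    _ = _ := by rw [← mul_assoc, (jucysMurphy_commute u v).eq]

end Adjacent

lemma commute_of_swap_jucysMurphy_of_ne {u v j : Fin n} (huv : (u : ℕ) + 1 = v) (hu : j ≠ u)
    (hv : j ≠ v) : Commute (of k _ (swap u v)) (jucysMurphy j) := by
  refine commute_of_jucysMurphy_of_apply_eq (swap_apply_of_ne_of_ne hu hv) fun i => ?_
  have hu' : (j : ℕ) ≠ u := Fin.val_ne_of_ne hu
  have hv' : (j : ℕ) ≠ v := Fin.val_ne_of_ne hv
  rw [swap_apply_def]
  split_ifs with h₁ h₂ <;> simp only [Fin.lt_def, Fin.ext_iff] at * <;> omega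

lemma finRange_eq_append_adjacent {u v : Fin n} (huv : (u : ℕ) + 1 = v) :
    ∃ p r, List.finRange n = p ++ u :: v :: r ∧ ∀ j ∈ p ++ r, j ≠ u ∧ j ≠ v := by
  have hu : u.val < (List.finRange n).length := by simp
  have hv : u.val + 1 < (List.finRange n).length := by simp [huv]
  have hsplit : List.finRange n =
      (List.finRange n).take u ++ u :: v :: (List.finRange n).drop (u + 2) := by
    conv_lhs => rw [← List.take_append_drop u.val (List.finRange n),
      List.drop_eq_getElem_cons hu, List.drop_eq_getElem_cons hv]
    simp [huv]
    omega
  refine ⟨_, _, hsplit, fun j hj => ?_⟩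
  have hnd := List.nodup_finRange n
  rw [hsplit, List.nodup_middle, List.nodup_cons, List.nodup_middle, List.nodup_cons] at hnd
  refine ⟨fun h => hnd.1 ?_, fun h => hnd.2.1 (h ▸ hj)⟩
  rw [h, List.mem_append] at hj
  rw [List.mem_append, List.mem_cons]
  tauto

variable (k) in
lemma exists_jucysMurphy_list_eq_append_adjacent {u v : Fin n} (huv : (u : ℕ) + 1 = v) :
    ∃ p r : List k[Perm (Fin n)],
      (List.finRange n).map jucysMurphy = p ++ jucysMurphy u :: jucysMurphy v :: r ∧
      (∀ z ∈ p, z ∈ Subring.centralizer {of k _ (swap u v)}) ∧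
      ∀ z ∈ r, z ∈ Subring.centralizer {of k _ (swap u v)} := by
  obtain ⟨p, r, hfin, hpr⟩ := finRange_eq_append_adjacent huv
  have hmem : ∀ j ∈ p ++ r,
      jucysMurphy j ∈ Subring.centralizer {of k (Perm (Fin n)) (swap u v)} := fun j hj =>
    mem_centralizer_singleton_iff_commute.2
      (commute_of_swap_jucysMurphy_of_ne huv (hpr j hj).1 (hpr j hj).2)
  rw [List.forall_mem_append] at hmem
  exact ⟨p.map jucysMurphy, r.map jucysMurphy, by simp [hfin], by simpa using hmem.1,
    by simpa using hmem.2⟩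

lemma commute_of_perm_of_adjacent_swaps {E : k[Perm (Fin n)]}
    (hE : ∀ u v : Fin n, (u : ℕ) + 1 = v → Commute (of k _ (swap u v)) E) (σ : Perm (Fin n)) :
    Commute (of k _ σ) E := by
  cases n with
  | zero => rw [Subsingleton.elim σ 1, map_one]; exact Commute.one_left E
  | succ N =>
    have hσ : σ ∈ Submonoid.closure (Set.range fun i : Fin N => swap i.castSucc i.succ) := by
      rw [Perm.mclosure_swap_castSucc_succ]; trivial
    induction hσ using Submonoid.closure_induction with
    | mem _ hg =>
      obtain ⟨i, rfl⟩ := hg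
      exact hE _ _ (by simp)
    | one => rw [map_one]; exact Commute.one_left E
    | mul _ _ _ _ ha hb => rw [map_mul]; exact ha.mul_left hb

lemma commute_of_orderedEsymm_jucysMurphy (σ : Perm (Fin n)) (c : ℕ) :
    Commute (of k _ σ) (orderedEsymm ((List.finRange n).map jucysMurphy) c) := by
  refine commute_of_perm_of_adjacent_swaps (fun u v huv => ?_) σ
  obtain ⟨p, r, hsplit, hp, hr⟩ := exists_jucysMurphy_list_eq_append_adjacent k huv
  rw [hsplit, ← mem_centralizer_singleton_iff_commute]
  exact orderedEsymm_append_pair_mem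
    (mem_centralizer_singleton_iff_commute.2 (commute_of_swap_jucysMurphy_add huv))
    (mem_centralizer_singleton_iff_commute.2 (commute_of_swap_jucysMurphy_mul huv)) hp hr c

lemma commute_of_orderedHsymm_jucysMurphy (σ : Perm (Fin n)) (c : ℕ) :
    Commute (of k _ σ) (orderedHsymm ((List.finRange n).map jucysMurphy) c) := by
  refine commute_of_perm_of_adjacent_swaps (fun u v huv => ?_) σ
  obtain ⟨p, r, hsplit, hp, hr⟩ := exists_jucysMurphy_list_eq_append_adjacent k huv
  rw [hsplit, ← mem_centralizer_singleton_iff_commute]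
  exact orderedHsymm_append_pair_mem (jucysMurphy_commute u v)
    (mem_centralizer_singleton_iff_commute.2 (commute_of_swap_jucysMurphy_add huv))
    (mem_centralizer_singleton_iff_commute.2 (commute_of_swap_jucysMurphy_mul huv)) hp hr c

end JucysMurphy

section WordSum

open scoped Classical

variable {α A : Type*} [Fintype α] [Semiring A] (w : α → A) {P Q : List α → Prop} {c : ℕ}

noncomputable def wordSum (P : List α → Prop) (c : ℕ) : A :=
  ∑ f : Fin c → α, if P (List.ofFn f) then ((List.ofFn f).map w).prod else 0

lemma wordSum_zero (P : List α → Prop) : wordSum w P 0 = if P [] then 1 else 0 := by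
  simp [wordSum]

lemma wordSum_congr (h : ∀ L : List α, L.length = c → (P L ↔ Q L)) :
    wordSum w P c = wordSum w Q c :=
  Finset.sum_congr rfl fun _ _ => if_congr (h _ List.length_ofFn) rfl rfl

lemma wordSum_eq_zero (h : ∀ L : List α, L.length = c → ¬ P L) : wordSum w P c = 0 :=
  Finset.sum_eq_zero fun _ _ => if_neg (h _ List.length_ofFn)

lemma wordSum_eq_add_and_not (Q : List α → Prop) :
    wordSum w P c = wordSum w (fun L => P L ∧ Q L) c + wordSum w (fun L => P L ∧ ¬ Q L) c := by
  rw [wordSum, wordSum, wordSum, ← Finset.sum_add_distrib]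
  refine Finset.sum_congr rfl fun f _ => ?_
  by_cases hQ : Q (List.ofFn f) <;> simp [hQ]

lemma wordSum_succ (P₁ : α → Prop) [DecidablePred P₁] (P₂ : List α → Prop)
    (h : ∀ a L, L.length = c → (P (a :: L) ↔ P₁ a ∧ P₂ L)) :
    wordSum w P (c + 1) = (∑ a, if P₁ a then w a else 0) * wordSum w P₂ c := by
  rw [wordSum, wordSum, Fintype.sum_mul_sum, ← Fintype.sum_prod_type']
  refine Fintype.sum_equiv (Fin.consEquiv fun _ => α).symm _ _ fun f => ?_
  simp only [Fin.consEquiv_symm_apply, List.ofFn_succ, h _ _ List.length_ofFn,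
    ite_zero_mul_ite_zero, List.map_cons, List.prod_cons]
  rfl

lemma wordSum_add {a b : ℕ} (P₁ P₂ : List α → Prop)
    (h : ∀ L₁ L₂, L₁.length = a → L₂.length = b → (P (L₁ ++ L₂) ↔ P₁ L₁ ∧ P₂ L₂)) :
    wordSum w P (a + b) = wordSum w P₁ a * wordSum w P₂ b := by
  rw [wordSum, wordSum, wordSum, Fintype.sum_mul_sum, ← Fintype.sum_prod_type']
  refine (Fintype.sum_equiv (Fin.appendEquiv a b) _ _ fun f => ?_).symm
  simp only [show Fin.appendEquiv a b f = Fin.append f.1 f.2 from rfl, List.ofFn_fin_append,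
    h _ _ List.length_ofFn List.length_ofFn, ite_zero_mul_ite_zero, List.map_append,
    List.prod_append]

end WordSum

section SortedWords

variable {k : Type*} [Ring k] {n : ℕ}

variable (k) in
noncomputable def swapWeight (p : Fin n × Fin n) : k[Perm (Fin n)] := of k _ (swap p.1 p.2)

lemma prod_map_swapWeight (L : List (Fin n × Fin n)) :
    (L.map (swapWeight k)).prod = of k _ (prodT n L) := by
  rw [prodT, map_list_prod, List.map_map]
  rfl

lemma jucysMurphy_eq_sum_swapWeight (v : Fin n) :
    jucysMurphy v = ∑ p : Fin n × Fin n, if p.1 < p.2 ∧ p.2 = v then swapWeight k p else 0 := by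
  rw [← Finset.sum_filter, jucysMurphy]
  refine Finset.sum_nbij' (fun i => (i, v)) Prod.fst ?_ ?_ ?_ ?_ ?_ <;>
    aesop (add simp swapWeight)

def IsSortedWord (r : Fin n → Fin n → Prop) (vs : List (Fin n)) (L : List (Fin n × Fin n)) :
    Prop :=
  (∀ p ∈ L, p.1 < p.2 ∧ p.2 ∈ vs) ∧ (L.map Prod.snd).Pairwise r

variable {r : Fin n → Fin n → Prop} {v : Fin n} {vs : List (Fin n)} {p : Fin n × Fin n}
  {L : List (Fin n × Fin n)}

lemma isSortedWord_nil_iff : IsSortedWord r [] L ↔ L = [] := by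
  refine ⟨fun h => List.eq_nil_iff_forall_not_mem.2 fun p hp => ?_,
    by rintro rfl; simp [IsSortedWord]⟩
  simpa using (h.1 p hp).2

lemma isSortedWord_cons_iff :
    IsSortedWord r vs (p :: L) ↔
      (p.1 < p.2 ∧ p.2 ∈ vs) ∧ (∀ q ∈ L, r p.2 q.2) ∧ IsSortedWord r vs L := by
  simp only [IsSortedWord, List.forall_mem_cons, List.map_cons, List.pairwise_cons,
    List.forall_mem_map]
  tauto

lemma isSortedWord_cons_and_not_mem_iff (hv : v ∉ vs) :
    IsSortedWord r (v :: vs) L ∧ v ∉ L.map Prod.snd ↔ IsSortedWord r vs L := by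
  simp only [IsSortedWord, List.mem_cons, List.mem_map, not_exists, not_and]
  constructor
  · rintro ⟨⟨h₁, h₂⟩, h₃⟩
    exact ⟨fun q hq => ⟨(h₁ q hq).1, (h₁ q hq).2.resolve_left fun h => h₃ q hq h⟩, h₂⟩
  · rintro ⟨h₁, h₂⟩
    exact ⟨⟨fun q hq => ⟨(h₁ q hq).1, Or.inr (h₁ q hq).2⟩, h₂⟩,
      fun q hq h => hv (h ▸ (h₁ q hq).2)⟩

lemma IsSortedWord.snd_eq_of_mem (hr : ∀ a b, r a b → a ≤ b) (hv : ∀ x ∈ vs, v < x)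
    (h : IsSortedWord r (v :: vs) (p :: L)) (hmem : v ∈ (p :: L).map Prod.snd) : p.2 = v := by
  obtain ⟨⟨-, hp⟩, hpL, -⟩ := isSortedWord_cons_iff.1 h
  refine le_antisymm ?_ ?_
  · rcases List.mem_cons.1 hmem with h | h
    · exact h.ge
    · obtain ⟨q, hq, rfl⟩ := List.mem_map.1 h
      exact hr _ _ (hpL q hq)
  · rcases List.mem_cons.1 hp with h | h
    · exact h.ge
    · exact (hv _ h).le

lemma isSortedWord_lt_cons_and_mem_iff (hv : ∀ x ∈ vs, v < x) :
    IsSortedWord (· < ·) (v :: vs) (p :: L) ∧ v ∈ (p :: L).map Prod.snd ↔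
      (p.1 < p.2 ∧ p.2 = v) ∧ IsSortedWord (· < ·) vs L := by
  constructor
  · rintro ⟨h, hmem⟩
    have hpv := h.snd_eq_of_mem (fun _ _ => le_of_lt) hv hmem
    obtain ⟨⟨hp, -⟩, hlt, hL, hpw⟩ := isSortedWord_cons_iff.1 h
    refine ⟨⟨hp, hpv⟩, fun q hq => ⟨(hL q hq).1, ?_⟩, hpw⟩
    exact (List.mem_cons.1 (hL q hq).2).resolve_left (hpv ▸ hlt q hq).ne'
  · rintro ⟨⟨hp, rfl⟩, hL, hpw⟩
    refine ⟨isSortedWord_cons_iff.2 ⟨⟨hp, List.mem_cons_self⟩, fun q hq => hv _ (hL q hq).2,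
      fun q hq => ⟨(hL q hq).1, List.mem_cons_of_mem _ (hL q hq).2⟩, hpw⟩, List.mem_cons_self⟩

lemma isSortedWord_le_cons_and_mem_iff (hv : ∀ x ∈ vs, v < x) :
    IsSortedWord (· ≤ ·) (v :: vs) (p :: L) ∧ v ∈ (p :: L).map Prod.snd ↔
      (p.1 < p.2 ∧ p.2 = v) ∧ IsSortedWord (· ≤ ·) (v :: vs) L := by
  constructor
  · rintro ⟨h, hmem⟩
    obtain ⟨⟨hp, -⟩, -, hL⟩ := isSortedWord_cons_iff.1 h
    exact ⟨⟨hp, h.snd_eq_of_mem (fun _ _ => id) hv hmem⟩, hL⟩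
  · rintro ⟨⟨hp, rfl⟩, hL⟩
    refine ⟨isSortedWord_cons_iff.2 ⟨⟨hp, List.mem_cons_self⟩, fun q hq => ?_, hL⟩,
      List.mem_cons_self⟩
    rcases List.mem_cons.1 (hL.1 q hq).2 with h | h
    · exact h.ge
    · exact (hv _ h).le

lemma wordSum_isSortedWord_lt (hvs : vs.Pairwise (· < ·)) (c : ℕ) :
    wordSum (swapWeight k) (IsSortedWord (· < ·) vs) c = orderedEsymm (vs.map jucysMurphy) c := by
  induction vs generalizing c with
  | nil =>
    cases c with
    | zero => simp [wordSum_zero, IsSortedWord]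
    | succ c =>
      rw [List.map_nil, orderedEsymm_nil_succ]
      refine wordSum_eq_zero _ fun L hL h => ?_
      simp [isSortedWord_nil_iff.1 h] at hL
  | cons v vs ih =>
    rw [List.pairwise_cons] at hvs
    cases c with
    | zero => simp [wordSum_zero, IsSortedWord]
    | succ c =>
      rw [wordSum_eq_add_and_not _ fun L => v ∈ L.map Prod.snd,
        wordSum_succ _ _ _ fun _ _ _ => isSortedWord_lt_cons_and_mem_iff hvs.1,
        wordSum_congr _ fun _ _ => isSortedWord_cons_and_not_mem_iff fun h => (hvs.1 v h).false,
        ih hvs.2, ih hvs.2, ← jucysMurphy_eq_sum_swapWeight, List.map_cons,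
        orderedEsymm_cons_succ, add_comm]

lemma wordSum_isSortedWord_le (hvs : vs.Pairwise (· < ·)) (c : ℕ) :
    wordSum (swapWeight k) (IsSortedWord (· ≤ ·) vs) c = orderedHsymm (vs.map jucysMurphy) c := by
  induction vs generalizing c with
  | nil =>
    cases c with
    | zero => simp [wordSum_zero, IsSortedWord]
    | succ c =>
      rw [List.map_nil, orderedHsymm_nil_succ]
      refine wordSum_eq_zero _ fun L hL h => ?_
      simp [isSortedWord_nil_iff.1 h] at hL
  | cons v vs ih =>
    rw [List.pairwise_cons] at hvs
    induction c with
    | zero => simp [wordSum_zero, IsSortedWord]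
    | succ c ihc =>
      rw [wordSum_eq_add_and_not _ fun L => v ∈ L.map Prod.snd,
        wordSum_succ _ _ _ fun _ _ _ => isSortedWord_le_cons_and_mem_iff hvs.1,
        wordSum_congr _ fun _ _ => isSortedWord_cons_and_not_mem_iff fun h => (hvs.1 v h).false,
        ihc, ih hvs.2, ← jucysMurphy_eq_sum_swapWeight, List.map_cons, orderedHsymm_cons_succ,
        add_comm]

end SortedWords

section Multimonotonic

variable {n c : ℕ} {cs ds : List ℕ} {L₁ L₂ : List (Fin n × Fin n)}

lemma isSortedWord_finRange_iff {r : Fin n → Fin n → Prop} [Trans r r r]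
    (L : List (Fin n × Fin n)) :
    IsSortedWord r (List.finRange n) L ↔ (∀ p ∈ L, p.1 < p.2) ∧ (L.map Prod.snd).IsChain r := by
  simp [IsSortedWord, List.isChain_iff_pairwise]

lemma isMultimonotonic_nil_nil_iff {L : List (Fin n × Fin n)} :
    IsMultimonotonic n [] [] L ↔ L = [] := by
  constructor
  · rintro ⟨-, B, C, rfl, hB, hC, -⟩
    simp_all
  · rintro rfl
    exact ⟨by simp, [], [], by simp, rfl, rfl, by simp, by simp⟩

lemma isMultimonotonic_cons_append_iff (h : L₁.length = c) :
    IsMultimonotonic n (c :: cs) ds (L₁ ++ L₂) ↔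
      IsSortedWord (· < ·) (List.finRange n) L₁ ∧ IsMultimonotonic n cs ds L₂ := by
  rw [isSortedWord_finRange_iff]
  constructor
  · rintro ⟨hp, B, C, hL, hB, hC, hBm, hCm⟩
    obtain ⟨β, B, rfl, hβ, hB'⟩ := List.map_eq_cons_iff.1 hB
    rw [List.cons_append, List.flatten_cons] at hL
    obtain ⟨rfl, rfl⟩ := List.append_inj hL (h.trans hβ.symm)
    rw [List.forall_mem_append] at hp
    rw [List.forall_mem_cons] at hBm
    exact ⟨⟨hp.1, hBm.1⟩, hp.2, B, C, rfl, hB', hC, hBm.2, hCm⟩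
  · rintro ⟨⟨hp₁, hc₁⟩, hp, B, C, rfl, hB, hC, hBm, hCm⟩
    exact ⟨List.forall_mem_append.2 ⟨hp₁, hp⟩, L₁ :: B, C, by simp, by simp [h, hB], hC,
      List.forall_mem_cons.2 ⟨hc₁, hBm⟩, hCm⟩

lemma isMultimonotonic_nil_cons_append_iff (h : L₁.length = c) :
    IsMultimonotonic n [] (c :: ds) (L₁ ++ L₂) ↔
      IsSortedWord (· ≤ ·) (List.finRange n) L₁ ∧ IsMultimonotonic n [] ds L₂ := by
  rw [isSortedWord_finRange_iff]
  constructor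
  · rintro ⟨hp, B, C, hL, hB, hC, -, hCm⟩
    obtain rfl := List.map_eq_nil_iff.1 hB
    obtain ⟨γ, C, rfl, hγ, hC'⟩ := List.map_eq_cons_iff.1 hC
    rw [List.nil_append, List.flatten_cons] at hL
    obtain ⟨rfl, rfl⟩ := List.append_inj hL (h.trans hγ.symm)
    rw [List.forall_mem_append] at hp
    rw [List.forall_mem_cons] at hCm
    exact ⟨⟨hp.1, hCm.1⟩, hp.2, [], C, rfl, rfl, hC', by simp, hCm.2⟩
  · rintro ⟨⟨hp₁, hc₁⟩, hp, B, C, rfl, hB, hC, hBm, hCm⟩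
    obtain rfl := List.map_eq_nil_iff.1 hB
    exact ⟨List.forall_mem_append.2 ⟨hp₁, hp⟩, [], L₁ :: C, by simp, rfl, by simp [h, hC],
      by simp, List.forall_mem_cons.2 ⟨hc₁, hCm⟩⟩

variable {k : Type*} [Ring k]

lemma commute_of_wordSum_isMultimonotonic (σ : Perm (Fin n)) (cs ds : List ℕ) :
    Commute (of k _ σ) (wordSum (swapWeight k) (IsMultimonotonic n cs ds) (cs.sum + ds.sum)) := by
  induction cs with
  | cons c cs ih =>
    rw [List.sum_cons, add_assoc,
      wordSum_add _ _ _ fun _ _ h _ => isMultimonotonic_cons_append_iff h,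
      wordSum_isSortedWord_lt (List.pairwise_lt_finRange n)]
    exact (commute_of_orderedEsymm_jucysMurphy σ c).mul_right ih
  | nil =>
    induction ds with
    | nil =>
      rw [wordSum_congr _ fun _ _ => isMultimonotonic_nil_nil_iff, List.sum_nil, add_zero,
        wordSum_zero, if_pos rfl]
      exact Commute.one_right _
    | cons d ds ih =>
      rw [List.sum_cons, Nat.add_left_comm,
        wordSum_add _ _ _ fun _ _ h _ => isMultimonotonic_nil_cons_append_iff h,
        wordSum_isSortedWord_le (List.pairwise_lt_finRange n)]
      exact (commute_of_orderedHsymm_jucysMurphy σ d).mul_right ih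

end Multimonotonic

section Counting

open Finset

lemma coeff_wordSum_swapWeight {k : Type*} [Ring k] {n : ℕ} (P : List (Fin n × Fin n) → Prop)
    (c : ℕ) (π : Perm (Fin n)) :
    (wordSum (swapWeight k) P c).coeff π =
      Nat.card {f : Fin c → Fin n × Fin n // P (List.ofFn f) ∧ prodT n (List.ofFn f) = π} := by
  classical
  rw [Nat.card_eq_fintype_card, Fintype.card_subtype, wordSum, coeff_sum, card_filter,
    Nat.cast_sum, Finsupp.finsetSum_apply]
  refine sum_congr rfl fun f _ => ?_
  rw [prod_map_swapWeight, of_apply]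
  by_cases hP : P (List.ofFn f) <;> by_cases hπ : prodT n (List.ofFn f) = π <;>
    simp [hP, hπ, coeff_single]

lemma coeff_conj_eq_of_commute {k G : Type*} [Semiring k] [Group G] {σ : G} {Z : k[G]}
    (hZ : Commute (of k G σ) Z) (π : G) : Z.coeff (σ * π * σ⁻¹) = Z.coeff π := by
  have h := congrArg (fun W : k[G] => W.coeff (σ * π)) hZ.eq
  simp only [of_apply, coeff_single_mul_apply, coeff_mul_single_apply, inv_mul_cancel_left,
    one_mul, mul_one] at h
  rw [← h]

lemma natCard_mul_mem_conjClass_eq {ι G : Type*} [Fintype ι] [Group G] [Fintype G]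
    (P : ι → Prop) (F : ι → G)
    (hF : ∀ σ π, Nat.card {i // P i ∧ F i = σ * π * σ⁻¹} = Nat.card {i // P i ∧ F i = π})
    {g g' : G} (h : IsConj g g') (K : ConjClasses G) :
    Nat.card {i // P i ∧ ConjClasses.mk (F i * g) = K} =
      Nat.card {i // P i ∧ ConjClasses.mk (F i * g') = K} := by
  classical
  have fiberwise : ∀ γ : G, Nat.card {i // P i ∧ ConjClasses.mk (F i * γ) = K} =
      ∑ π, if ConjClasses.mk (π * γ) = K then Nat.card {i // P i ∧ F i = π} else 0 := fun γ => by
    simp only [Nat.card_eq_fintype_card, Fintype.card_subtype]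
    rw [card_eq_sum_card_fiberwise (f := F) (t := univ) fun _ _ => mem_univ _]
    refine sum_congr rfl fun π _ => ?_
    rw [filter_filter]
    split_ifs with hπ
    · exact congrArg card (filter_congr fun i _ =>
        ⟨fun h => ⟨h.1.1, h.2⟩, fun h => ⟨⟨h.1, h.2 ▸ hπ⟩, h.2⟩⟩)
    · rw [card_eq_zero, filter_eq_empty_iff]
      rintro i - ⟨⟨-, hK⟩, rfl⟩
      exact hπ hK
  obtain ⟨τ, rfl⟩ := isConj_iff.1 h
  rw [fiberwise, fiberwise]
  refine Fintype.sum_equiv (MulAut.conj τ).toEquiv _ _ fun π => ?_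
  have hK : ConjClasses.mk (τ * π * τ⁻¹ * (τ * g * τ⁻¹)) = ConjClasses.mk (π * g) :=
    ConjClasses.mk_eq_mk_iff_isConj.2 (isConj_iff.2 ⟨τ⁻¹, by group⟩)
  simp only [MulEquiv.toEquiv_eq_coe, MulEquiv.coe_toEquiv, MulAut.conj_apply, hK, hF]

end Counting

theorem multimonotonic_count_conj_invariant_general (n : ℕ) (cs ds : List ℕ)
    (K : ConjClasses (Equiv.Perm (Fin n))) (g g' : Equiv.Perm (Fin n)) (h : IsConj g g') :
    Nat.card {f : Fin (cs.sum + ds.sum) → Fin n × Fin n //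
        IsMultimonotonic n cs ds (List.ofFn f) ∧
          ConjClasses.mk (prodT n (List.ofFn f) * g) = K} =
    Nat.card {f : Fin (cs.sum + ds.sum) → Fin n × Fin n //
        IsMultimonotonic n cs ds (List.ofFn f) ∧
          ConjClasses.mk (prodT n (List.ofFn f) * g') = K} := by
  refine natCard_mul_mem_conjClass_eq _ (fun f => prodT n (List.ofFn f)) (fun σ π => ?_) h K
  have hcoeff := coeff_conj_eq_of_commute (commute_of_wordSum_isMultimonotonic (k := ℤ) σ cs ds) π
  rwa [coeff_wordSum_swapWeight, coeff_wordSum_swapWeight, Nat.cast_inj] at hcoeff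

/-- The number of multimonotonic sequences of transpositions of type
`((c_1,…,c_l), (d_1,…,d_m))` whose product, multiplied by `g`, lands in a fixed conjugacy
class `K` of `S_n` depends only on the conjugacy class (cycle type) of `g`. -/
theorem multimonotonic_count_conj_invariant (n : ℕ) (hn : 1 ≤ n) (cs ds : List ℕ)
    (K : ConjClasses (Equiv.Perm (Fin n))) (g g' : Equiv.Perm (Fin n)) (h : IsConj g g') :
    Nat.card {f : Fin (cs.sum + ds.sum) → Fin n × Fin n //
        IsMultimonotonic n cs ds (List.ofFn f) ∧
          ConjClasses.mk (prodT n (List.ofFn f) * g) = K} =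
    Nat.card {f : Fin (cs.sum + ds.sum) → Fin n × Fin n //
        IsMultimonotonic n cs ds (List.ofFn f) ∧
          ConjClasses.mk (prodT n (List.ofFn f) * g') = K} :=
  multimonotonic_count_conj_invariant_general n cs ds K g g' h
end

section
/- Let G be a finite group and let χ and χ' be irreducible ℂ-characters of G. Then the central group-algebra elements F_χ := (χ(1)/|G|) Σ_{g ∈ G} χ(g⁻¹) g satisfy F_χ · F_{χ'} = δ_{χ,χ'} F_χ; that is, F_χ · F_χ = F_χ, and F_χ · F_{χ'} = 0 whenever χ ≠ χ'. -/
/-- `χ : G → ℂ` is an irreducible character of the finite group `G`: it is the character of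
some irreducible (simple) finite-dimensional complex representation of `G`. -/
def IsIrreducibleCharacter (G : Type) [Group G] (χ : G → ℂ) : Prop :=
  ∃ V : FDRep ℂ G, CategoryTheory.Simple V ∧ FDRep.character V = χ

/-- The central group-algebra element `F_χ = (χ(1)/|G|) ∑_{g ∈ G} χ(g⁻¹) g ∈ ℂ[G]`
attached to a character `χ` of a finite group `G`. -/
noncomputable def charIdem (G : Type) [Group G] [Fintype G] (χ : G → ℂ) :
    MonoidAlgebra ℂ G :=
  (χ 1 / (Fintype.card G : ℂ)) • ∑ g : G, MonoidAlgebra.single g (χ g⁻¹)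

/-! Since `χ_V` is a class function, `∑_g χ_V(g⁻¹) ρ_W(g)` commutes with the action of `G` on an
irreducible `W`, so by Schur's lemma it is a scalar `c`. Taking the trace after `ρ_W(x)` gives
`∑_g χ_V(g⁻¹) χ_W(x g) = c χ_W(x)`, and at `x = 1` character orthogonality pins down
`c χ_W(1) = |G| δ_{V ≅ W}`. This generalized orthogonality relation is precisely the coefficient
of `x⁻¹` in `F_{χ_V} F_{χ_W}`. -/

open CategoryTheory

theorem MonoidAlgebra.sum_single_mul_sum_single {R G : Type*} [Semiring R] [Group G] [Fintype G]
    (a b : G → R) :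
    (∑ g, single g (a g)) * (∑ h, single h (b h)) = ∑ x, single x (∑ g, a g * b (g⁻¹ * x)) := by
  have reindex (g : G) : ∑ h, single (g * h) (a g * b h) = ∑ x, single x (a g * b (g⁻¹ * x)) :=
    Fintype.sum_equiv (Equiv.mulLeft g) _ _ fun h => by simp
  simp_rw [Finset.sum_mul_sum, single_mul_single, reindex]
  rw [Finset.sum_comm]
  exact Finset.sum_congr rfl fun x _ => (map_sum (singleAddHom x) _ _).symm

namespace FDRep

variable {k G : Type*} [Field k] [Group G]

theorem exists_eq_smul_one_of_commute_ρ [IsAlgClosed k] (W : FDRep k G) [Simple W]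
    (f : Module.End k W) (hf : ∀ g, Commute (W.ρ g) f) : ∃ c : k, f = c • 1 := by
  let F : W ⟶ W := ⟨ObjectProperty.homMk (ModuleCat.ofHom f), fun g => by
    ext x; exact LinearMap.congr_fun (hf g).symm x⟩
  obtain ⟨c, hc⟩ := endomorphism_simple_eq_smul_id k F
  exact ⟨c, congrArg (fun φ : W ⟶ W => φ.hom.hom.hom) hc.symm⟩

theorem char_inv_conj (V : FDRep k G) (g h : G) :
    V.character (h * g * h⁻¹)⁻¹ = V.character g⁻¹ := by
  rw [show (h * g * h⁻¹)⁻¹ = h * g⁻¹ * h⁻¹ by group, char_conj]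

variable [Fintype G]

theorem commute_ρ_sum_smul_ρ (W : FDRep k G) {φ : G → k}
    (hφ : ∀ g h, φ (h * g * h⁻¹) = φ g) (h : G) :
    Commute (W.ρ h) (∑ g, φ g • W.ρ g) := by
  rw [Commute, SemiconjBy, Finset.mul_sum, Finset.sum_mul]
  refine Fintype.sum_equiv (MulAut.conj h).toEquiv _ _ fun g => ?_
  simp only [MulEquiv.toEquiv_eq_coe, MulEquiv.coe_toEquiv, MulAut.conj_apply, hφ, mul_smul_comm,
    smul_mul_assoc, ← map_mul, inv_mul_cancel_right]

theorem exists_sum_mul_char_mul_eq_mul [IsAlgClosed k] (W : FDRep k G) [Simple W]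
    {φ : G → k} (hφ : ∀ g h, φ (h * g * h⁻¹) = φ g) :
    ∃ c : k, ∀ x, ∑ g, φ g * W.character (x * g) = c * W.character x := by
  obtain ⟨c, hc⟩ := W.exists_eq_smul_one_of_commute_ρ _ (commute_ρ_sum_smul_ρ W hφ)
  refine ⟨c, fun x => ?_⟩
  have := congrArg (fun f => LinearMap.trace k W (W.ρ x * f)) hc
  simpa [character, Finset.mul_sum, map_sum, ← map_mul, mul_comm c] using this

variable [IsAlgClosed k] [Invertible (Nat.card G : k)]

open scoped Classical in
theorem sum_char_inv_mul_char (V W : FDRep k G) [Simple V] [Simple W] :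
    ∑ g, V.character g⁻¹ * W.character g = if Nonempty (V ≅ W) then (Nat.card G : k) else 0 := by
  have h := char_orthonormal V W
  rw [inv_mul_eq_iff_eq_mul₀ (Invertible.ne_zero _)] at h
  rw [Fintype.sum_equiv (Equiv.inv G) _ (fun g => V.character g * W.character g⁻¹)
    fun g => by simp, h]
  split_ifs <;> simp

open scoped Classical in
theorem exists_sum_char_inv_mul_char_mul (V W : FDRep k G) [Simple V] [Simple W] :
    ∃ c : k, c * W.character 1 = (if Nonempty (V ≅ W) then (Nat.card G : k) else 0) ∧
      ∀ x, ∑ g, V.character g⁻¹ * W.character (x * g) = c * W.character x := by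
  obtain ⟨c, hc⟩ :=
    W.exists_sum_mul_char_mul_eq_mul (φ := fun g => V.character g⁻¹) (char_inv_conj V)
  refine ⟨c, ?_, hc⟩
  simpa [sum_char_inv_mul_char] using (hc 1).symm

-- `char_one` only gives `finrank k W`, which could vanish in positive characteristic.
theorem char_one_ne_zero (W : FDRep k G) [Simple W] : W.character 1 ≠ 0 := by
  obtain ⟨c, hc, -⟩ := exists_sum_char_inv_mul_char_mul W W
  rw [if_pos ⟨Iso.refl W⟩] at hc
  exact right_ne_zero_of_mul (hc.trans_ne (Invertible.ne_zero _))

open scoped Classical in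
theorem sum_char_inv_mul_char_mul (V W : FDRep k G) [Simple V] [Simple W] (x : G) :
    ∑ g, V.character g⁻¹ * W.character (x * g) =
      if Nonempty (V ≅ W) then (Nat.card G : k) / W.character 1 * W.character x else 0 := by
  obtain ⟨c, hc1, hc⟩ := exists_sum_char_inv_mul_char_mul V W
  rw [hc]
  split_ifs at hc1 ⊢
  · rw [← hc1, mul_div_cancel_right₀ _ (char_one_ne_zero W)]
  · rw [(mul_eq_zero.mp hc1).resolve_right (char_one_ne_zero W), zero_mul]

end FDRep

open scoped Classical in
theorem charIdem_character_mul_charIdem_character {G : Type} [Group G] [Fintype G]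
    (V W : FDRep ℂ G) [Simple V] [Simple W] :
    charIdem G V.character * charIdem G W.character =
      if Nonempty (V ≅ W) then charIdem G W.character else 0 := by
  have : Invertible (Nat.card G : ℂ) := invertibleOfNonzero (by simp)
  simp only [charIdem, smul_mul_smul_comm, MonoidAlgebra.sum_single_mul_sum_single, mul_inv_rev,
    inv_inv, FDRep.sum_char_inv_mul_char_mul]
  split_ifs with hiso
  · simp_rw [← MonoidAlgebra.smul_single', ← Finset.smul_sum, smul_smul,
      FDRep.char_iso hiso.some, ← Nat.card_eq_fintype_card]
    congr 1
    field_simp [FDRep.char_one_ne_zero W]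
  · simp

/-- Orthogonal idempotents: for irreducible characters `χ, χ'` of a finite group `G`, the
elements `F_χ = (χ(1)/|G|) ∑_g χ(g⁻¹) g` satisfy `F_χ · F_{χ'} = δ_{χ,χ'} F_χ`; that is,
`F_χ · F_χ = F_χ`, and `F_χ · F_{χ'} = 0` whenever `χ ≠ χ'`. -/
theorem charIdem_orthogonal_idempotent (G : Type) [Group G] [Fintype G] (χ χ' : G → ℂ)
    (hχ : IsIrreducibleCharacter G χ) (hχ' : IsIrreducibleCharacter G χ') :
    charIdem G χ * charIdem G χ = charIdem G χ ∧
      (χ ≠ χ' → charIdem G χ * charIdem G χ' = 0) := by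
  obtain ⟨V, hV, rfl⟩ := hχ
  obtain ⟨W, hW, rfl⟩ := hχ'
  refine ⟨(charIdem_character_mul_charIdem_character V V).trans (if_pos ⟨Iso.refl V⟩),
    fun hne => ?_⟩
  rw [charIdem_character_mul_charIdem_character, if_neg]
  rintro ⟨i⟩
  exact hne (FDRep.char_iso i)
end
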